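/- arXiv:1202.2340 — 2 statements merged into one kernel-verified Lean document; each statement's English description precedes it below -/
import Mathlib

section
/- Let u₁, …, u_n be involutions of ℙ¹(ℂ) and v = u_n⋯u₁ their product. Suppose there exist two distinct points x₁, x₂ of ℙ¹(ℂ) with v(x₁) = x₂ and v(x₂) = x₁. Then v² = 1, and consequently for every point p of ℙ¹(ℂ), applying the sequence of involutions u₁, u₂, …, u_n, u₁, …, u_n returns to p (the 2n-step polygon closes from every starting point). -/
open Projectivization

noncomputable section

/-- The complex projective line `ℙ¹(ℂ)`. -/
abbrev ProjLine : Type := Projectivization ℂ (Fin 2 → ℂ)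

/-- The permutation of `ℙ¹(ℂ)` induced by a linear automorphism of `ℂ²`. -/
def projPerm (e : (Fin 2 → ℂ) ≃ₗ[ℂ] (Fin 2 → ℂ)) : Equiv.Perm ProjLine where
  toFun := Projectivization.map e.toLinearMap e.injective
  invFun := Projectivization.map e.symm.toLinearMap e.symm.injective
  left_inv := fun p => by
    induction p using Projectivization.ind with
    | h v hv => simp [Projectivization.map_mk]
  right_inv := fun p => by
    induction p using Projectivization.ind with
    | h v hv => simp [Projectivization.map_mk]

/-- The action of `GL(2,ℂ)` on `ℙ¹(ℂ)` by Möbius (projective) transformations,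
as a group homomorphism to the permutation group of `ℙ¹(ℂ)`. -/
def mobius : GL (Fin 2) ℂ →* Equiv.Perm ProjLine where
  toFun g := projPerm ((LinearMap.GeneralLinearGroup.generalLinearEquiv ℂ (Fin 2 → ℂ))
      (Matrix.GeneralLinearGroup.toLin g))
  map_one' := by
    ext p
    induction p using Projectivization.ind with
    | h v hv => simp [projPerm, Projectivization.map_mk]
  map_mul' g h := by
    ext p
    induction p using Projectivization.ind with
    | h v hv =>
      simp [projPerm, Projectivization.map_mk]

/-- `PGL(2,ℂ)`, realized faithfully as the group of Möbius transformations of `ℙ¹(ℂ)`. -/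
def PGL2 : Subgroup (Equiv.Perm ProjLine) := mobius.range

end

/-!
Choose representatives `w₁, w₂ ∈ ℂ²` of the two exchanged points; they form a basis, and in
it a linear lift of `v` is anti-diagonal, `w₁ ↦ a w₂`, `w₂ ↦ b w₁`. Its square is then the
scalar `a b`, which acts trivially on `ℙ¹(ℂ)`.
-/

open Module Function
open scoped LinearAlgebra.Projectivization

theorem LinearMap.comp_self_eq_smul_id_of_swap {K V : Type*} [Field K] [AddCommGroup V]
    [Module K V] (hV : finrank K V = 2) {f : V →ₗ[K] V} {w₁ w₂ : V}
    (hw : LinearIndependent K ![w₁, w₂]) {a b : K} (h₁ : f w₁ = a • w₂) (h₂ : f w₂ = b • w₁) :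
    f ∘ₗ f = (a * b) • LinearMap.id := by
  refine LinearMap.ext_on_range (hw.span_eq_top_of_card_eq_finrank (by simp [hV])) ?_
  intro i
  fin_cases i <;> simp [h₁, h₂, smul_smul, mul_comm]

namespace Projectivization

theorem map_map_eq_self_of_swap {K V : Type*} [Field K] [AddCommGroup V] [Module K V]
    (hV : finrank K V = 2) {f : V →ₗ[K] V} (hf : Injective f) {x₁ x₂ : ℙ K V} (hx : x₁ ≠ x₂)
    (h₁ : map f hf x₁ = x₂) (h₂ : map f hf x₂ = x₁) (p : ℙ K V) :
    map f hf (map f hf p) = p := by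
  induction x₁ using ind with | h w₁ hw₁ => ?_
  induction x₂ using ind with | h w₂ hw₂ => ?_
  induction p using ind with | h w hw => ?_
  rw [map_mk, mk_eq_mk_iff'] at h₁ h₂
  obtain ⟨a, ha⟩ := h₁
  obtain ⟨b, hb⟩ := h₂
  have hli : LinearIndependent K ![w₁, w₂] :=
    (independent_mk_iff_LinearIndependent hw₁ hw₂).mp ((independent_pair_iff_ne _ _).mpr hx)
  have hff := LinearMap.comp_self_eq_smul_id_of_swap hV hli ha.symm hb.symm
  simp only [map_mk, mk_eq_mk_iff']
  exact ⟨a * b, by simpa using (LinearMap.congr_fun hff w).symm⟩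

end Projectivization

theorem PGL2.exists_coe_eq_map (σ : PGL2) :
    ∃ (f : (Fin 2 → ℂ) →ₗ[ℂ] (Fin 2 → ℂ)) (hf : Injective f),
      ⇑(σ : Equiv.Perm ProjLine) = Projectivization.map f hf := by
  obtain ⟨g, hg⟩ := σ.2
  exact ⟨_, LinearEquiv.injective _, congrArg DFunLike.coe hg.symm⟩

theorem pgl2_poncelet_porism_general (v : PGL2) (x₁ x₂ : ProjLine) (hx : x₁ ≠ x₂)
    (h₁ : (↑v : Equiv.Perm ProjLine) x₁ = x₂)
    (h₂ : (↑v : Equiv.Perm ProjLine) x₂ = x₁) :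
    v ^ 2 = 1 ∧ ∀ p : ProjLine,
      (↑v : Equiv.Perm ProjLine) ((↑v : Equiv.Perm ProjLine) p) = p := by
  obtain ⟨f, hf, hv⟩ := PGL2.exists_coe_eq_map v
  rw [hv] at h₁ h₂ ⊢
  have hvv := Projectivization.map_map_eq_self_of_swap (by simp) hf hx h₁ h₂
  refine ⟨Subtype.ext (Equiv.ext fun p => ?_), hvv⟩
  simpa [pow_two, hv] using hvv p

/-- Poncelet-type porism: let `u₁, …, uₙ` be involutions of `ℙ¹(ℂ)` and
`v = uₙ ⋯ u₁` their product.  If `v` swaps two distinct points `x₁ ≠ x₂`, then `v² = 1`;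
consequently the `2n`-step polygon closes from every starting point `p`. -/
theorem pgl2_poncelet_porism (n : ℕ) (u : Fin n → PGL2)
    (hinv : ∀ i, u i ≠ 1 ∧ (u i) ^ 2 = 1)
    (v : PGL2) (hv : v = (List.ofFn u).reverse.prod)
    (x₁ x₂ : ProjLine) (hx : x₁ ≠ x₂)
    (h₁ : (↑v : Equiv.Perm ProjLine) x₁ = x₂)
    (h₂ : (↑v : Equiv.Perm ProjLine) x₂ = x₁) :
    v ^ 2 = 1 ∧ ∀ p : ProjLine,
      (↑v : Equiv.Perm ProjLine) ((↑v : Equiv.Perm ProjLine) p) = p :=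
  pgl2_poncelet_porism_general v x₁ x₂ hx h₁ h₂
end

section
/- Let u, v be the involutions of ℙ¹(ℂ) with fixed points {1, −1} and {0, 2/x} respectively (x ∈ ℂ, x ≠ 0). Then (uv)^n = 1 in PGL(2,ℂ) if and only if P_{n−1}(x) = 0, where P₀ = 1, P₁ = x, P_n = xP_{n−1} − P_{n−2}. -/
open Projectivization

/-- The Fibonacci-like polynomial sequence `P₀ = 1`, `P₁ = x`, `Pₙ = x·Pₙ₋₁ − Pₙ₋₂`,
with values at a fixed `x : ℂ`. -/
def Pfib (x : ℂ) : ℕ → ℂ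
  | 0 => 1
  | 1 => x
  | (n + 2) => x * Pfib x (n + 1) - Pfib x n

/-- `PfibShift x n = P_{n-1}(x)`, with the convention `P_{−1} = 0`. -/
def PfibShift (x : ℂ) : ℕ → ℂ
  | 0 => 0
  | (n + 1) => Pfib x n

/-! The product `uv` has matrix `!![x, -1; 1, 0]`, the companion matrix of the recurrence, so the
entries of its `n`-th power are read off from `P_n(x)` and `P_{n-1}(x)`. A Möbius transformation
is trivial exactly when its matrix is scalar, and for this power that happens exactly when
`P_{n-1}(x) = 0`. -/

open Matrix

lemma Pfib_succ (x : ℂ) (n : ℕ) : Pfib x (n + 1) = x * Pfib x n - PfibShift x n := by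
  cases n <;> simp [Pfib, PfibShift]

lemma matrix_pow_eq_Pfib (x : ℂ) (n : ℕ) :
    !![x, -1; 1, 0] ^ n =
      !![Pfib x n, -PfibShift x n; PfibShift x n, Pfib x n - x * PfibShift x n] := by
  induction n with
  | zero => simp [Pfib, PfibShift, one_fin_two]
  | succ n ih =>
    rw [pow_succ, ih, mul_fin_two, Pfib_succ]
    ext i j
    fin_cases i <;> fin_cases j <;> simp [PfibShift] <;> ring

lemma mobius_mk_eq_self_iff (g : GL (Fin 2) ℂ) {w : Fin 2 → ℂ} (hw : w ≠ 0) :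
    mobius g (mk ℂ w hw) = mk ℂ w hw ↔ ∃ a : ℂ, a • w = (g : Matrix (Fin 2) (Fin 2) ℂ) *ᵥ w := by
  simp [mobius, projPerm, map_mk, mk_eq_mk_iff']

lemma mobius_eq_one_iff (g : GL (Fin 2) ℂ) :
    mobius g = 1 ↔ g 0 1 = 0 ∧ g 1 0 = 0 ∧ g 0 0 = g 1 1 := by
  constructor
  · intro h
    -- `g` fixes `[1:0]`, `[0:1]` and `[1:1]`, which forces it to be scalar.
    have fixes (w : Fin 2 → ℂ) (hw : w ≠ 0) : ∃ a : ℂ, a • w = (g : Matrix (Fin 2) (Fin 2) ℂ) *ᵥ w :=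
      (mobius_mk_eq_self_iff g hw).1 (by rw [h]; rfl)
    obtain ⟨a, ha⟩ := fixes ![1, 0] (by simp)
    obtain ⟨b, hb⟩ := fixes ![0, 1] (by simp)
    obtain ⟨c, hc⟩ := fixes ![1, 1] (by simp)
    simp only [mulVec_fin_two, smul_cons, smul_eq_mul, smul_empty, mul_one, mul_zero, add_zero,
      zero_add, cons_val_zero, cons_val_one, funext_iff, Fin.forall_fin_two] at ha hb hc
    refine ⟨?_, ?_, ?_⟩ <;> grind
  · rintro ⟨h01, h10, hdiag⟩
    ext1 p
    induction p using ind with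
    | h w hw =>
      refine (mobius_mk_eq_self_iff g hw).2 ⟨g 0 0, ?_⟩
      ext i; fin_cases i <;> simp [mulVec, dotProduct, h01, h10, hdiag]

theorem pgl2_two_lines_poncelet_general (x : ℂ) (n : ℕ)
    (u v : GL (Fin 2) ℂ)
    (hu : (u : Matrix (Fin 2) (Fin 2) ℂ) = !![0, 1; 1, 0])
    (hv : (v : Matrix (Fin 2) (Fin 2) ℂ) = !![1, 0; x, -1]) :
    (mobius u * mobius v) ^ n = 1 ↔ PfibShift x n = 0 := by
  have huv : ((u * v : GL (Fin 2) ℂ) : Matrix (Fin 2) (Fin 2) ℂ) = !![x, -1; 1, 0] := by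
    rw [Units.val_mul, hu, hv, mul_fin_two]
    simp
  rw [← map_mul, ← map_pow, mobius_eq_one_iff, Units.val_pow_eq_pow_val, huv, matrix_pow_eq_Pfib]
  simp +contextual

/-- Poncelet criterion for two lines: with `u` the Möbius transformation of matrix
`[[0,1],[1,0]]` (fixing `1` and `−1`) and `v` the one of matrix `[[1,0],[x,−1]]`
(fixing `0` and `2/x`), `(uv)^n = 1` in `PGL(2,ℂ)` iff `P_{n−1}(x) = 0`. -/
theorem pgl2_two_lines_poncelet (x : ℂ) (hx : x ≠ 0) (n : ℕ) (hn : 1 ≤ n)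
    (u v : GL (Fin 2) ℂ)
    (hu : (u : Matrix (Fin 2) (Fin 2) ℂ) = !![0, 1; 1, 0])
    (hv : (v : Matrix (Fin 2) (Fin 2) ℂ) = !![1, 0; x, -1]) :
    (mobius u * mobius v) ^ n = 1 ↔ PfibShift x n = 0 :=
  pgl2_two_lines_poncelet_general x n u v hu hv
end
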